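/- The partial Fréchet R-squared characterizes the partial null hypothesis: under H₀^P, i.e., P(m⊕(X) = m⊕⁽⁰⁾(X₁)) = 1, one has D_{2|1}(P) = 0 and hence R²⊕,₂|₁ = 0; conversely, if P(m⊕(X) ≠ m⊕⁽⁰⁾(X₁)) > 0, then M(m⊕(X), X) < M(m⊕⁽⁰⁾(X₁), X) on a set of positive probability and hence R²⊕,₂|₁ > 0. -/

import Mathlib

/- The partial Fréchet R-squared characterizes the partial null hypothesis:
   R²⊕,₂|₁ = 0 under H₀^P, and R²⊕,₂|₁ > 0 whenever P(m⊕(X) ≠ m⊕⁽⁰⁾(X₁)) > 0. -/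

open MeasureTheory ProbabilityTheory Filter Set
open scoped Topology ENNReal NNReal BigOperators

noncomputable section

namespace FrechetRegression

variable {p₁ p₂ : ℕ} {Ω : Type*} [MetricSpace Ω] [MeasurableSpace Ω] [BorelSpace Ω]

/-- predictor space indexed by a finite index type. -/
abbrev EV (ι : Type*) := EuclideanSpace ℝ ι

/-- the full predictor index: `Fin p₁ ⊕ Fin p₂`, the first block being the base
predictors X₁ and the second the additional predictors X₂. -/
abbrev ιF (p₁ p₂ : ℕ) := Fin p₁ ⊕ Fin p₂

/-- projection of the full predictor onto its first (base) block. -/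
def proj1 (x : EV (ιF p₁ p₂)) : EV (Fin p₁) := WithLp.toLp 2 (fun i => x (Sum.inl i))

variable {ι : Type*} [Fintype ι] [DecidableEq ι]

/-- population mean of a predictor under the joint law `P`. -/
def popMean (P : Measure (EV ι × Ω)) : EV ι := ∫ zy, zy.1 ∂P

/-- population covariance matrix of a predictor under `P`. -/
def popCov (P : Measure (EV ι × Ω)) : Matrix ι ι ℝ :=
  Matrix.of fun i j => ∫ zy, (zy.1 i - popMean P i) * (zy.1 j - popMean P j) ∂P

/-- the weight function s(z,x) = 1 + (z−μ)ᵀ A (x−μ). -/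
def wt (μv : EV ι) (A : Matrix ι ι ℝ) (z x : EV ι) : ℝ :=
  1 + dotProduct (fun i => z i - μv i) (A.mulVec fun i => x i - μv i)

/-- the full-model Fréchet regression objective M(ω,x) = E(s(X,x) d²(ω,Y)). -/
def Mobj (P : Measure (EV ι × Ω)) (ω : Ω) (x : EV ι) : ℝ :=
  ∫ zy, wt (popMean P) (popCov P)⁻¹ zy.1 x * dist ω zy.2 ^ 2 ∂P

/-- population mean of the base predictor X₁. -/
def popMean1 (P : Measure (EV (ιF p₁ p₂) × Ω)) : EV (Fin p₁) :=
  ∫ zy, proj1 zy.1 ∂P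

/-- population covariance matrix Σ₁₁ of the base predictor X₁. -/
def popCov11 (P : Measure (EV (ιF p₁ p₂) × Ω)) : Matrix (Fin p₁) (Fin p₁) ℝ :=
  Matrix.of fun i j =>
    ∫ zy, (proj1 zy.1 i - popMean1 P i) * (proj1 zy.1 j - popMean1 P j) ∂P

/-- the base-model Fréchet regression objective M⁽⁰⁾(ω,x₁) = E(s(X₁,x₁) d²(ω,Y)). -/
def M0obj (P : Measure (EV (ιF p₁ p₂) × Ω)) (ω : Ω) (x₁ : EV (Fin p₁)) : ℝ :=
  ∫ zy, wt (popMean1 P) (popCov11 P)⁻¹ (proj1 zy.1) x₁ * dist ω zy.2 ^ 2 ∂P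

variable {Θ : Type*} [MeasurableSpace Θ]

/-- sample mean of the predictors. -/
def sampleMean (X : ℕ → Θ → EV ι) (n : ℕ) (θ : Θ) : EV ι :=
  (n : ℝ)⁻¹ • ∑ j ∈ Finset.range n, X j θ

/-- sample covariance matrix of the predictors. -/
def sampleCov (X : ℕ → Θ → EV ι) (n : ℕ) (θ : Θ) : Matrix ι ι ℝ :=
  Matrix.of fun i j => (n : ℝ)⁻¹ * ∑ k ∈ Finset.range n,
    (X k θ i - sampleMean X n θ i) * (X k θ j - sampleMean X n θ j)

/-- the empirical full-model objective Mₙ(ω,x) with estimated weights. -/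
def Mn (X : ℕ → Θ → EV ι) (Y : ℕ → Θ → Ω) (n : ℕ) (θ : Θ) (ω : Ω) (x : EV ι) : ℝ :=
  (n : ℝ)⁻¹ * ∑ j ∈ Finset.range n,
    wt (sampleMean X n θ) (sampleCov X n θ)⁻¹ (X j θ) x * dist ω (Y j θ) ^ 2

/-- the empirical base-model objective Mₙ⁽⁰⁾(ω,x₁) with estimated weights. -/
def Mn0 (X : ℕ → Θ → EV (ιF p₁ p₂)) (Y : ℕ → Θ → Ω) (n : ℕ) (θ : Θ) (ω : Ω)
    (x₁ : EV (Fin p₁)) : ℝ :=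
  (n : ℝ)⁻¹ * ∑ j ∈ Finset.range n,
    wt (sampleMean (fun j θ => proj1 (X j θ)) n θ)
      (sampleCov (fun j θ => proj1 (X j θ)) n θ)⁻¹ (proj1 (X j θ)) x₁ *
      dist ω (Y j θ) ^ 2

/-- Assumption 1: uniform local Lipschitz property of the squared distance. -/
def Assumption1 (Ω : Type*) [MetricSpace Ω] : Prop :=
  ∃ ε > (0 : ℝ), ∃ L > (0 : ℝ), ∀ ω₁ ω₂ : Ω, dist ω₁ ω₂ < ε →
    ∀ y : Ω, |dist ω₁ y ^ 2 - dist ω₂ y ^ 2| ≤ L * dist ω₁ ω₂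

/-- Assumption 2: closed balls of some fixed radius `r > 0` are totally bounded. -/
def Assumption2 (Ω : Type*) [MetricSpace Ω] : Prop :=
  ∃ r > (0 : ℝ), ∀ ω : Ω, TotallyBounded (Metric.closedBall ω r)

/-- Assumption 3: for each x ∈ D the full-model Fréchet regression function m⊕(x) is
the unique minimizer of M(·,x), uniformly well separated in x ∈ D. -/
def Assumption3 (P : Measure (EV ι × Ω)) (D : Set (EV ι)) (m : EV ι → Ω) : Prop :=
  (∀ x ∈ D, IsMinOn (fun ω => Mobj P ω x) univ (m x)) ∧
  (∀ x ∈ D, ∀ ω : Ω, Mobj P ω x = Mobj P (m x) x → ω = m x) ∧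
  (∀ ε > (0 : ℝ), ∃ Δ > (0 : ℝ), ∀ x ∈ D, ∀ ω : Ω, ε < dist ω (m x) →
    Δ ≤ Mobj P ω x - Mobj P (m x) x)

/-- `B`-many ε-brackets in L₂(P) covering the function class `G`. -/
def HasBracketing (P : Measure (EV ι × Ω)) (ε : ℝ) (G : Set ((EV ι × Ω) → ℝ))
    (B : ℕ) : Prop :=
  ∃ gl gu : Fin B → (EV ι × Ω) → ℝ,
    (∀ j, Real.sqrt (∫ zy, (gu j zy - gl j zy) ^ 2 ∂P) < ε) ∧
    ∀ g ∈ G, ∃ j, ∀ zy, gl j zy ≤ g zy ∧ g zy ≤ gu j zy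

/-- L₂(P)-bracketing number. -/
def bracketNum (P : Measure (EV ι × Ω)) (ε : ℝ) (G : Set ((EV ι × Ω) → ℝ)) : ℕ :=
  sInf {B : ℕ | HasBracketing P ε G B}

/-- the function class G_δ. -/
def Gclass (P : Measure (EV ι × Ω)) (D : Set (EV ι)) (m : EV ι → Ω) (δ : ℝ) :
    Set ((EV ι × Ω) → ℝ) :=
  {g | ∃ x ∈ D, ∃ ω : Ω, dist ω (m x) ≤ δ ∧
    g = fun zy => wt (popMean P) (popCov P)⁻¹ zy.1 x *
      (dist ω zy.2 ^ 2 - dist (m x) zy.2 ^ 2)}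

/-- the bracketing entropy integral J(δ). -/
def Jint (P : Measure (EV ι × Ω)) (D : Set (EV ι)) (m : EV ι → Ω) (c δ : ℝ) : ℝ :=
  ∫ ε in (0:ℝ)..1,
    Real.sqrt (1 + Real.log (bracketNum P (c * ε * δ) (Gclass P D m δ)))

/-- Assumption 4 (with exponent η): for every c > 0, J(δ) = O(δ^{−η}) as δ → 0⁺. -/
def Assumption4 (P : Measure (EV ι × Ω)) (D : Set (EV ι)) (m : EV ι → Ω)
    (η : ℝ) : Prop :=
  ∀ c > (0 : ℝ),
    (fun δ : ℝ => Jint P D m c δ) =O[𝓝[>] (0:ℝ)] fun δ : ℝ => δ ^ (-η)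

/-- Assumption 5: the base-model Fréchet regression function m⊕⁽⁰⁾(x₁) is for every x₁
the unique minimizer of M⁽⁰⁾(·,x₁), uniformly well separated in x₁. -/
def Assumption5 (P : Measure (EV (ιF p₁ p₂) × Ω)) (m0 : EV (Fin p₁) → Ω) : Prop :=
  (∀ x₁, IsMinOn (fun ω => M0obj P ω x₁) univ (m0 x₁)) ∧
  (∀ x₁, ∀ ω : Ω, M0obj P ω x₁ = M0obj P (m0 x₁) x₁ → ω = m0 x₁) ∧
  (∀ ε > (0 : ℝ), ∃ Δ > (0 : ℝ), ∀ x₁, ∀ ω : Ω, ε < dist ω (m0 x₁) →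
    Δ ≤ M0obj P ω x₁ - M0obj P (m0 x₁) x₁)

/-- Assumption 6 (with curvature exponent α > 1): the objectives grow at least like
D·dᵅ near their minimizers, uniformly in the predictor. -/
def Assumption6 (P : Measure (EV (ιF p₁ p₂) × Ω)) (D : Set (EV (ιF p₁ p₂)))
    (m : EV (ιF p₁ p₂) → Ω) (m0 : EV (Fin p₁) → Ω) (α : ℝ) : Prop :=
  ∃ τ > (0 : ℝ), ∃ C > (0 : ℝ),
    (∀ x ∈ D, ∀ ω : Ω, dist ω (m x) < τ →
      C * dist ω (m x) ^ α ≤ Mobj P ω x - Mobj P (m x) x) ∧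
    (∀ x₁, ∀ ω : Ω, dist ω (m0 x₁) < τ →
      C * dist ω (m0 x₁) ^ α ≤ M0obj P ω x₁ - M0obj P (m0 x₁) x₁)

theorem partial_R_squared_characterization
    [TopologicalSpace.SeparableSpace Ω]
    (P : Measure (EV (ιF p₁ p₂) × Ω)) [IsProbabilityMeasure P]
    (D : Set (EV (ιF p₁ p₂))) (hDclosed : IsClosed D) (hDbdd : Bornology.IsBounded D)
    (hXD : ∀ᵐ zy ∂P, zy.1 ∈ D)
    (hSigma : IsUnit (popCov P).det) (hSigma11 : IsUnit (popCov11 P).det)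
    -- the full-model Fréchet regression function m⊕ (unique minimizer of M(·,x))
    (m : EV (ιF p₁ p₂) → Ω)
    (hmin : ∀ x ∈ D, IsMinOn (fun ω => Mobj P ω x) univ (m x))
    (huniq : ∀ x ∈ D, ∀ ω : Ω, Mobj P ω x = Mobj P (m x) x → ω = m x)
    -- the base-model Fréchet regression function m⊕⁽⁰⁾ (unique minimizer of M⁽⁰⁾(·,x₁))
    (m0 : EV (Fin p₁) → Ω)
    (h0min : ∀ x₁, IsMinOn (fun ω => M0obj P ω x₁) univ (m0 x₁))
    (h0uniq : ∀ x₁, ∀ ω : Ω, M0obj P ω x₁ = M0obj P (m0 x₁) x₁ → ω = m0 x₁)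
    -- integrability and nondegeneracy: 0 < E(M(m⊕⁽⁰⁾(X₁),X)) < ∞
    (hInt0 : Integrable (fun zy => Mobj P (m0 (proj1 zy.1)) zy.1) P)
    (hIntm : Integrable (fun zy => Mobj P (m zy.1) zy.1) P)
    (hpos : 0 < ∫ zy, Mobj P (m0 (proj1 zy.1)) zy.1 ∂P) :
    -- conclusions
    ((∀ᵐ zy ∂P, m zy.1 = m0 (proj1 zy.1)) →
      (∫ zy, Mobj P (m0 (proj1 zy.1)) zy.1 ∂P) -
        (∫ zy, Mobj P (m zy.1) zy.1 ∂P) = 0 ∧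
      1 - (∫ zy, Mobj P (m zy.1) zy.1 ∂P) /
        (∫ zy, Mobj P (m0 (proj1 zy.1)) zy.1 ∂P) = 0) ∧
    (P {zy | m zy.1 ≠ m0 (proj1 zy.1)} ≠ 0 →
      P {zy | Mobj P (m zy.1) zy.1 < Mobj P (m0 (proj1 zy.1)) zy.1} ≠ 0 ∧
      0 < 1 - (∫ zy, Mobj P (m zy.1) zy.1 ∂P) /
        (∫ zy, Mobj P (m0 (proj1 zy.1)) zy.1 ∂P)) := by
  constructor
  · intro hae
    have hEq : (∫ zy, Mobj P (m0 (proj1 zy.1)) zy.1 ∂P)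
        = ∫ zy, Mobj P (m zy.1) zy.1 ∂P := by
      refine integral_congr_ae (hae.mono fun zy hz => ?_)
      dsimp only
      rw [hz]
    constructor
    · rw [hEq]; ring
    · rw [hEq] at hpos ⊢
      rw [div_self hpos.ne']; ring
  · intro hne
    -- a.e. pointwise inequality
    set f : EV (ιF p₁ p₂) × Ω → ℝ :=
      fun zy => Mobj P (m0 (proj1 zy.1)) zy.1 - Mobj P (m zy.1) zy.1 with hf
    have hle : 0 ≤ᵐ[P] f := by
      refine hXD.mono fun zy hzD => ?_
      have := hmin zy.1 hzD (mem_univ (m0 (proj1 zy.1)))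
      simpa [hf] using this
    -- the strict set has positive measure
    have hsub : {zy : EV (ιF p₁ p₂) × Ω | m zy.1 ≠ m0 (proj1 zy.1)} ⊆
        {zy | Mobj P (m zy.1) zy.1 < Mobj P (m0 (proj1 zy.1)) zy.1} ∪
        {zy | zy.1 ∉ D} := by
      intro zy hz
      by_cases hD : zy.1 ∈ D
      · left
        have hle' : Mobj P (m zy.1) zy.1 ≤ Mobj P (m0 (proj1 zy.1)) zy.1 :=
          hmin zy.1 hD (mem_univ (m0 (proj1 zy.1)))
        rcases lt_or_eq_of_le hle' with h | h
        · exact h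
        · exact absurd ((huniq zy.1 hD (m0 (proj1 zy.1)) h.symm).symm) hz
      · right; exact hD
    have hnullD : P {zy : EV (ιF p₁ p₂) × Ω | zy.1 ∉ D} = 0 := by
      simpa [ae_iff] using hXD
    have hBpos : P {zy | Mobj P (m zy.1) zy.1 < Mobj P (m0 (proj1 zy.1)) zy.1} ≠ 0 := by
      intro h0
      apply hne
      refine le_antisymm ?_ zero_le
      calc P {zy : EV (ιF p₁ p₂) × Ω | m zy.1 ≠ m0 (proj1 zy.1)}
          ≤ P ({zy | Mobj P (m zy.1) zy.1 < Mobj P (m0 (proj1 zy.1)) zy.1} ∪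
              {zy | zy.1 ∉ D}) := measure_mono hsub
        _ ≤ P {zy | Mobj P (m zy.1) zy.1 < Mobj P (m0 (proj1 zy.1)) zy.1} +
              P {zy | zy.1 ∉ D} := measure_union_le _ _
        _ = 0 := by rw [h0, hnullD, add_zero]
    refine ⟨hBpos, ?_⟩
    have hIntf : Integrable f P := hInt0.sub hIntm
    have hsupp : {zy | Mobj P (m zy.1) zy.1 < Mobj P (m0 (proj1 zy.1)) zy.1} ⊆
        Function.support f := by
      intro zy hz
      simp only [Function.mem_support, hf]
      exact sub_ne_zero_of_ne (ne_of_gt hz)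
    have hfpos : 0 < ∫ zy, f zy ∂P := by
      rw [integral_pos_iff_support_of_nonneg_ae hle hIntf]
      exact lt_of_lt_of_le (pos_iff_ne_zero.mpr hBpos) (measure_mono hsupp)
    have hsub' : (∫ zy, f zy ∂P) =
        (∫ zy, Mobj P (m0 (proj1 zy.1)) zy.1 ∂P) - ∫ zy, Mobj P (m zy.1) zy.1 ∂P :=
      integral_sub hInt0 hIntm
    have hlt : (∫ zy, Mobj P (m zy.1) zy.1 ∂P) <
        ∫ zy, Mobj P (m0 (proj1 zy.1)) zy.1 ∂P := by
      linarith [hfpos, hsub'.symm ▸ hfpos]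
    have : (∫ zy, Mobj P (m zy.1) zy.1 ∂P) /
        (∫ zy, Mobj P (m0 (proj1 zy.1)) zy.1 ∂P) < 1 :=
      (div_lt_one hpos).mpr hlt
    linarith

end FrechetRegression
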